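/- arXiv:1901.07276 — 2 statements merged into one kernel-verified Lean document; each statement's English description precedes it below -/
import Mathlib

section
/- The trilinear functional Ψ(f₀,f₁,f₂) = (1/2πi) τ(f₀(∂₁f₁)(∂₂f₂) − f₀(∂₂f₁)(∂₁f₂)) is a Hochschild 2-cocycle: Ψ(f₀f₁,f₂,f₃) − Ψ(f₀,f₁f₂,f₃) + Ψ(f₀,f₁,f₂f₃) − Ψ(f₃f₀,f₁,f₂) = 0. -/
open MeasureTheory

/-- The twisted product `(f • g)_n(u) = ∑_k f_k(u) g_{n-k}(u + kℏ)`. -/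
noncomputable def ncProd (ℏ : ℝ) (f g : ℤ → ℝ → ℂ) : ℤ → ℝ → ℂ :=
  fun n u => ∑' k : ℤ, f k u * g (n - k) (u + k * ℏ)

/-- `∂₁ f = ∑_n f_n'(u) W^n`. -/
noncomputable def d1 (f : ℤ → ℝ → ℂ) : ℤ → ℝ → ℂ := fun n u => deriv (f n) u

/-- `∂₂ f = 2πi ∑_n n f_n(u) W^n`. -/
noncomputable def d2 (f : ℤ → ℝ → ℂ) : ℤ → ℝ → ℂ :=
  fun n u => 2 * Real.pi * Complex.I * n * f n u

/-- The trace `τ(f) = ∫_ℝ f₀(u) du`. -/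
noncomputable def tau (f : ℤ → ℝ → ℂ) : ℂ := ∫ u : ℝ, f 0 u

/-- `Ψ(f₀,f₁,f₂) = (1/2πi) τ(f₀(∂₁f₁)(∂₂f₂) − f₀(∂₂f₁)(∂₁f₂))`. -/
noncomputable def Psi (ℏ : ℝ) (a b c : ℤ → ℝ → ℂ) : ℂ :=
  (2 * Real.pi * Complex.I)⁻¹ *
    (tau (ncProd ℏ (ncProd ℏ a (d1 b)) (d2 c)) -
      tau (ncProd ℏ (ncProd ℏ a (d2 b)) (d1 c)))

/-!
Finitely supported families of Schwartz functions form a non-unital associative algebra under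
the twisted product (the crossed product of `𝓢(ℝ)` by translation by `ℏ`), on which `∂₁`, `∂₂`
are derivations and `τ` is a trace, the latter by translation invariance of Lebesgue measure.
For any trace `τ` and derivations `D`, `E` of an associative algebra, `τ (a * D b * E c)` is a
Hochschild 2-cocycle: after expanding with the Leibniz rule the terms cancel in pairs, except one
that the trace property turns into the last term. `Ψ` is `(2πi)⁻¹` times the difference of two
such cochains.
-/

open Function SchwartzMap
open scoped SchwartzMap

theorem trace_mul_derivation_cocycle {A M : Type*} [NonUnitalRing A] [AddCommGroup M]
    (τ : A →+ M) (hτ : ∀ a b, τ (a * b) = τ (b * a)) (D E : A →+ A)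
    (hD : ∀ a b, D (a * b) = D a * b + a * D b) (hE : ∀ a b, E (a * b) = E a * b + a * E b)
    (a b c d : A) :
    τ (a * b * D c * E d) - τ (a * D (b * c) * E d) + τ (a * D b * E (c * d))
      - τ (d * a * D b * E c) = 0 := by
  have hcyc : τ (a * D b * (E c * d)) = τ (d * a * D b * E c) := by
    rw [← mul_assoc, hτ, ← mul_assoc, ← mul_assoc]
  rw [hD, hE, mul_add, add_mul, mul_add, map_add, map_add, hcyc]
  simp only [mul_assoc]
  abel

theorem SchwartzMap.exists_coe_eq_mul_comp_add_const (φ ψ : 𝓢(ℝ, ℂ)) (c : ℝ) :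
    ∃ χ : 𝓢(ℝ, ℂ), ⇑χ = fun u => φ u * ψ (u + c) :=
  ⟨smulLeftCLM ℂ φ (compSubConstCLM ℂ (-c) ψ), by
    funext u
    simp [smulLeftCLM_apply_apply φ.hasTemperateGrowth, compSubConstCLM_apply]⟩

structure IsSchwartzFamily (f : ℤ → ℝ → ℂ) : Prop where
  finite_support : (support f).Finite
  exists_schwartz (n : ℤ) : ∃ φ : 𝓢(ℝ, ℂ), f n = φ

namespace IsSchwartzFamily

variable {f g : ℤ → ℝ → ℂ}

theorem differentiable (hf : IsSchwartzFamily f) (n : ℤ) : Differentiable ℝ (f n) := by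
  obtain ⟨φ, hφ⟩ := hf.exists_schwartz n
  exact hφ ▸ φ.differentiable

theorem integrable (hf : IsSchwartzFamily f) (n : ℤ) : Integrable (f n) := by
  obtain ⟨φ, hφ⟩ := hf.exists_schwartz n
  exact hφ ▸ φ.integrable

theorem add (hf : IsSchwartzFamily f) (hg : IsSchwartzFamily g) : IsSchwartzFamily (f + g) := by
  refine ⟨(hf.finite_support.union hg.finite_support).subset (support_add f g), fun n => ?_⟩
  obtain ⟨φ, hφ⟩ := hf.exists_schwartz n
  obtain ⟨ψ, hψ⟩ := hg.exists_schwartz n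
  exact ⟨φ + ψ, by simp [hφ, hψ]⟩

theorem neg (hf : IsSchwartzFamily f) : IsSchwartzFamily (-f) := by
  refine ⟨by simpa using hf.finite_support, fun n => ?_⟩
  obtain ⟨φ, hφ⟩ := hf.exists_schwartz n
  exact ⟨-φ, by simp [hφ]⟩

end IsSchwartzFamily

def schwartzFamilies : AddSubgroup (ℤ → ℝ → ℂ) where
  carrier := {f | IsSchwartzFamily f}
  add_mem' := IsSchwartzFamily.add
  zero_mem' := ⟨by simp, fun _ => ⟨0, rfl⟩⟩
  neg_mem' := IsSchwartzFamily.neg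

section ncProd

variable {ℏ : ℝ} {f g : ℤ → ℝ → ℂ}

theorem summable_ncProd_terms (hf : (support f).Finite) (g : ℤ → ℝ → ℂ) (n : ℤ) (u : ℝ) :
    Summable fun k : ℤ => f k u * g (n - k) (u + k * ℏ) :=
  summable_of_hasFiniteSupport <| hf.subset fun k hk hfk => hk (by simp [hfk])

theorem ncProd_apply_eq_sum {s : Finset ℤ} (hs : support f ⊆ s) (g : ℤ → ℝ → ℂ) (n : ℤ) (u : ℝ) :
    ncProd ℏ f g n u = ∑ k ∈ s, f k u * g (n - k) (u + k * ℏ) :=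
  tsum_eq_sum fun k hk => by simp [notMem_support.mp fun h => hk (hs h)]

open Pointwise in
theorem support_ncProd_subset (ℏ : ℝ) (f g : ℤ → ℝ → ℂ) :
    support (ncProd ℏ f g) ⊆ support f + support g := by
  intro n hn
  by_contra hmem
  refine hn (funext fun u => ?_)
  have hterm : ∀ k : ℤ, f k u * g (n - k) (u + k * ℏ) = 0 := by
    intro k
    by_contra hk
    exact hmem ⟨k, fun h => hk (by simp [h]), n - k, fun h => hk (by simp [h]), add_sub_cancel k n⟩
  simp [ncProd, hterm]

theorem ncProd_zero_left (g : ℤ → ℝ → ℂ) : ncProd ℏ 0 g = 0 := by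
  funext n u
  simp [ncProd]

theorem ncProd_zero_right (f : ℤ → ℝ → ℂ) : ncProd ℏ f 0 = 0 := by
  funext n u
  simp [ncProd]

theorem ncProd_add_left {f₁ f₂ : ℤ → ℝ → ℂ} (hf₁ : (support f₁).Finite)
    (hf₂ : (support f₂).Finite) (g : ℤ → ℝ → ℂ) :
    ncProd ℏ (f₁ + f₂) g = ncProd ℏ f₁ g + ncProd ℏ f₂ g := by
  funext n u
  simp only [ncProd, Pi.add_apply, add_mul]
  exact (summable_ncProd_terms hf₁ g n u).tsum_add (summable_ncProd_terms hf₂ g n u)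

theorem ncProd_add_right (hf : (support f).Finite) (g₁ g₂ : ℤ → ℝ → ℂ) :
    ncProd ℏ f (g₁ + g₂) = ncProd ℏ f g₁ + ncProd ℏ f g₂ := by
  funext n u
  simp only [ncProd, Pi.add_apply, mul_add]
  exact (summable_ncProd_terms hf g₁ n u).tsum_add (summable_ncProd_terms hf g₂ n u)

theorem ncProd_assoc (hf : (support f).Finite) (hg : (support g).Finite) (h : ℤ → ℝ → ℂ) :
    ncProd ℏ (ncProd ℏ f g) h = ncProd ℏ f (ncProd ℏ g h) := by
  funext n u
  have hsum : ∀ j : ℤ, Summable fun k : ℤ =>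
      f j u * g (k - j) (u + j * ℏ) * h (n - k) (u + k * ℏ) := fun j =>
    summable_of_hasFiniteSupport <| (hg.preimage (sub_left_injective (b := j)).injOn).subset
      fun k hk hgk => hk (by simp [hgk])
  calc ncProd ℏ (ncProd ℏ f g) h n u
      = ∑' k : ℤ, ∑ j ∈ hf.toFinset, f j u * g (k - j) (u + j * ℏ) * h (n - k) (u + k * ℏ) := by
        refine tsum_congr fun k => ?_
        rw [ncProd_apply_eq_sum (s := hf.toFinset) (by simp), Finset.sum_mul]
    _ = ∑ j ∈ hf.toFinset, ∑' m : ℤ,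
          f j u * g m (u + j * ℏ) * h (n - (j + m)) (u + (j + m : ℤ) * ℏ) := by
        rw [Summable.tsum_finsetSum fun j _ => hsum j]
        refine Finset.sum_congr rfl fun j _ => ?_
        rw [← (Equiv.addLeft j).tsum_eq]
        simp
    _ = ncProd ℏ f (ncProd ℏ g h) n u := by
        rw [ncProd_apply_eq_sum (s := hf.toFinset) (by simp)]
        refine Finset.sum_congr rfl fun j _ => ?_
        rw [ncProd, ← tsum_mul_left]
        refine tsum_congr fun m => ?_
        rw [sub_add_eq_sub_sub, Int.cast_add, add_mul, ← add_assoc, mul_assoc]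

end ncProd

section Derivations

variable {ℏ : ℝ} {f g : ℤ → ℝ → ℂ}

theorem support_d1_subset (f : ℤ → ℝ → ℂ) : support (d1 f) ⊆ support f := fun n hn hfn =>
  hn (funext fun u => by simp [d1, hfn])

theorem support_d2_subset (f : ℤ → ℝ → ℂ) : support (d2 f) ⊆ support f := fun n hn hfn =>
  hn (funext fun u => by simp [d2, hfn])

theorem d1_add (hf : IsSchwartzFamily f) (hg : IsSchwartzFamily g) :
    d1 (f + g) = d1 f + d1 g := by
  funext n u
  exact deriv_add (hf.differentiable n u) (hg.differentiable n u)

theorem d2_add (f g : ℤ → ℝ → ℂ) : d2 (f + g) = d2 f + d2 g := by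
  funext n u
  simp only [d2, Pi.add_apply]
  ring

theorem d1_ncProd (hf : IsSchwartzFamily f) (hg : IsSchwartzFamily g) :
    d1 (ncProd ℏ f g) = ncProd ℏ (d1 f) g + ncProd ℏ f (d1 g) := by
  funext n u
  have hF : support f ⊆ hf.finite_support.toFinset := by simp
  have hderiv : HasDerivAt (fun v => ∑ k ∈ hf.finite_support.toFinset,
      f k v * g (n - k) (v + k * ℏ)) (∑ k ∈ hf.finite_support.toFinset,
        (d1 f k u * g (n - k) (u + k * ℏ) + f k u * d1 g (n - k) (u + k * ℏ))) u :=
    HasDerivAt.fun_sum fun k _ => (hf.differentiable k u).hasDerivAt.mul <|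
      HasDerivAt.comp_add_const u _ (hg.differentiable (n - k) _).hasDerivAt
  rw [Pi.add_apply, Pi.add_apply, ncProd_apply_eq_sum hF,
    ncProd_apply_eq_sum ((support_d1_subset f).trans hF), ← Finset.sum_add_distrib,
    ← hderiv.deriv]
  exact congrArg (deriv · u) (funext fun v => ncProd_apply_eq_sum hF g n v)

theorem d2_ncProd (hf : (support f).Finite) (g : ℤ → ℝ → ℂ) :
    d2 (ncProd ℏ f g) = ncProd ℏ (d2 f) g + ncProd ℏ f (d2 g) := by
  funext n u
  rw [Pi.add_apply, Pi.add_apply, ncProd, ncProd, ← Summable.tsum_add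
    (summable_ncProd_terms (hf.subset (support_d2_subset f)) g n u)
    (summable_ncProd_terms hf _ n u), d2, ncProd, ← tsum_mul_left]
  refine tsum_congr fun k => ?_
  simp only [d2, Int.cast_sub]
  ring

end Derivations

namespace IsSchwartzFamily

variable {ℏ : ℝ} {f g : ℤ → ℝ → ℂ}

theorem ncProd (hf : IsSchwartzFamily f) (hg : IsSchwartzFamily g) :
    IsSchwartzFamily (ncProd ℏ f g) := by
  refine ⟨(hf.finite_support.add hg.finite_support).subset (support_ncProd_subset ℏ f g),
    fun n => ?_⟩
  choose φ hφ using hf.exists_schwartz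
  choose ψ hψ using hg.exists_schwartz
  choose χ hχ using fun k => (φ k).exists_coe_eq_mul_comp_add_const (ψ (n - k)) (k * ℏ)
  refine ⟨∑ k ∈ hf.finite_support.toFinset, χ k, funext fun u => ?_⟩
  rw [ncProd_apply_eq_sum (s := hf.finite_support.toFinset) (by simp), FunLike.coe_sum,
    Finset.sum_apply]
  simp [hφ, hψ, hχ]

theorem d1 (hf : IsSchwartzFamily f) : IsSchwartzFamily (d1 f) := by
  refine ⟨hf.finite_support.subset (support_d1_subset f), fun n => ?_⟩
  obtain ⟨φ, hφ⟩ := hf.exists_schwartz n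
  exact ⟨derivCLM ℂ ℂ φ, by funext u; simp [_root_.d1, hφ, derivCLM_apply]⟩

theorem d2 (hf : IsSchwartzFamily f) : IsSchwartzFamily (d2 f) := by
  refine ⟨hf.finite_support.subset (support_d2_subset f), fun n => ?_⟩
  obtain ⟨φ, hφ⟩ := hf.exists_schwartz n
  exact ⟨(2 * Real.pi * Complex.I * n) • φ, by funext u; simp [_root_.d2, hφ]⟩

end IsSchwartzFamily

section Trace

variable {ℏ : ℝ} {f g : ℤ → ℝ → ℂ}

theorem tau_add (hf : IsSchwartzFamily f) (hg : IsSchwartzFamily g) :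
    tau (f + g) = tau f + tau g :=
  integral_add (hf.integrable 0) (hg.integrable 0)

theorem tau_ncProd (hf : IsSchwartzFamily f) (hg : IsSchwartzFamily g) :
    tau (ncProd ℏ f g) = ∑' k : ℤ, ∫ u, f k u * g (-k) (u + k * ℏ) := by
  have hF : support f ⊆ hf.finite_support.toFinset := by simp
  have hint : ∀ k, Integrable fun u => f k u * g (-k) (u + k * ℏ) := fun k => by
    obtain ⟨φ, hφ⟩ := hf.exists_schwartz k
    obtain ⟨ψ, hψ⟩ := hg.exists_schwartz (-k)
    obtain ⟨χ, hχ⟩ := φ.exists_coe_eq_mul_comp_add_const ψ (k * ℏ)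
    simpa [hφ, hψ, ← hχ] using χ.integrable
  simp only [tau, ncProd_apply_eq_sum hF, zero_sub]
  rw [integral_finsetSum _ fun k _ => hint k, tsum_eq_sum fun k hk => ?_]
  simp [notMem_support.mp fun h => hk (hF h)]

theorem tau_ncProd_comm (hf : IsSchwartzFamily f) (hg : IsSchwartzFamily g) :
    tau (ncProd ℏ f g) = tau (ncProd ℏ g f) := by
  -- reindex `k ↦ -k`, then substitute `u ↦ u + k ℏ` in each integral
  rw [tau_ncProd hf hg, tau_ncProd hg hf, ← (Equiv.neg ℤ).tsum_eq]
  refine tsum_congr fun k => ?_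
  rw [← integral_add_right_eq_self _ (k * ℏ)]
  congr 1 with u
  simp only [Equiv.neg_apply, neg_neg, Int.cast_neg]
  ring_nf

end Trace

/-- Indexed by `ℏ` only so that its multiplication instance can depend on `ℏ`. -/
def SchwartzCrossedProduct (_ℏ : ℝ) : Type := schwartzFamilies

noncomputable section

namespace SchwartzCrossedProduct

variable {ℏ : ℝ}

instance : AddCommGroup (SchwartzCrossedProduct ℏ) :=
  inferInstanceAs (AddCommGroup schwartzFamilies)

def coeff (a : SchwartzCrossedProduct ℏ) : ℤ → ℝ → ℂ := Subtype.val a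

theorem isSchwartzFamily (a : SchwartzCrossedProduct ℏ) : IsSchwartzFamily a.coeff :=
  Subtype.prop a

theorem coeff_zero : (0 : SchwartzCrossedProduct ℏ).coeff = 0 := rfl

@[ext]
theorem ext {a b : SchwartzCrossedProduct ℏ} (h : a.coeff = b.coeff) : a = b :=
  Subtype.ext h

def mk (f : ℤ → ℝ → ℂ) (hf : IsSchwartzFamily f) : SchwartzCrossedProduct ℏ := ⟨f, hf⟩

instance : Mul (SchwartzCrossedProduct ℏ) :=
  ⟨fun a b => mk (ncProd ℏ a.coeff b.coeff) (a.isSchwartzFamily.ncProd b.isSchwartzFamily)⟩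

instance : NonUnitalRing (SchwartzCrossedProduct ℏ) where
  left_distrib a _ _ := ext (ncProd_add_right a.isSchwartzFamily.finite_support _ _)
  right_distrib a b _ :=
    ext (ncProd_add_left a.isSchwartzFamily.finite_support b.isSchwartzFamily.finite_support _)
  zero_mul _ := ext (ncProd_zero_left _)
  mul_zero _ := ext (ncProd_zero_right _)
  mul_assoc a b _ :=
    ext (ncProd_assoc a.isSchwartzFamily.finite_support b.isSchwartzFamily.finite_support _)

def trace : SchwartzCrossedProduct ℏ →+ ℂ where
  toFun a := tau a.coeff
  map_zero' := by simp [tau, coeff_zero]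
  map_add' a b := tau_add a.isSchwartzFamily b.isSchwartzFamily

def deriv₁ : SchwartzCrossedProduct ℏ →+ SchwartzCrossedProduct ℏ where
  toFun a := mk (d1 a.coeff) a.isSchwartzFamily.d1
  map_zero' := ext (show d1 0 = 0 by funext n u; simp [d1])
  map_add' a b := ext (d1_add a.isSchwartzFamily b.isSchwartzFamily)

def deriv₂ : SchwartzCrossedProduct ℏ →+ SchwartzCrossedProduct ℏ where
  toFun a := mk (d2 a.coeff) a.isSchwartzFamily.d2
  map_zero' := ext (show d2 0 = 0 by funext n u; simp [d2])
  map_add' a b := ext (d2_add a.coeff b.coeff)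

theorem trace_mul_comm (a b : SchwartzCrossedProduct ℏ) : trace (a * b) = trace (b * a) :=
  tau_ncProd_comm a.isSchwartzFamily b.isSchwartzFamily

theorem deriv₁_mul (a b : SchwartzCrossedProduct ℏ) :
    deriv₁ (a * b) = deriv₁ a * b + a * deriv₁ b :=
  ext (d1_ncProd a.isSchwartzFamily b.isSchwartzFamily)

theorem deriv₂_mul (a b : SchwartzCrossedProduct ℏ) :
    deriv₂ (a * b) = deriv₂ a * b + a * deriv₂ b :=
  ext (d2_ncProd a.isSchwartzFamily.finite_support _)

theorem Psi_coeff (a b c : SchwartzCrossedProduct ℏ) :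
    Psi ℏ a.coeff b.coeff c.coeff = (2 * Real.pi * Complex.I)⁻¹ *
      (trace (a * deriv₁ b * deriv₂ c) - trace (a * deriv₂ b * deriv₁ c)) :=
  rfl

theorem Psi_cocycle (a b c d : SchwartzCrossedProduct ℏ) :
    Psi ℏ (a * b).coeff c.coeff d.coeff - Psi ℏ a.coeff (b * c).coeff d.coeff
      + Psi ℏ a.coeff b.coeff (c * d).coeff - Psi ℏ (d * a).coeff b.coeff c.coeff = 0 := by
  simp only [Psi_coeff]
  linear_combination (2 * Real.pi * Complex.I)⁻¹ *
    (trace_mul_derivation_cocycle trace trace_mul_comm deriv₁ deriv₂ deriv₁_mul deriv₂_mul a b c d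
      - trace_mul_derivation_cocycle trace trace_mul_comm deriv₂ deriv₁ deriv₂_mul deriv₁_mul
        a b c d)

end SchwartzCrossedProduct

end

theorem IsSchwartzFamily.of_schwartz (f : ℤ → 𝓢(ℝ, ℂ)) (hf : (support f).Finite) :
    IsSchwartzFamily fun n => ⇑(f n) :=
  ⟨hf.subset fun n hn hfn => hn (by simp [hfn]), fun n => ⟨f n, rfl⟩⟩

/-- `Ψ` is a Hochschild 2-cocycle. -/
theorem Psi_hochschild_cocycle (ℏ : ℝ) (f0 f1 f2 f3 : ℤ → SchwartzMap ℝ ℂ)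
    (h0 : (Function.support f0).Finite) (h1 : (Function.support f1).Finite)
    (h2 : (Function.support f2).Finite) (h3 : (Function.support f3).Finite) :
    Psi ℏ (ncProd ℏ (fun n => ⇑(f0 n)) (fun n => ⇑(f1 n))) (fun n => ⇑(f2 n)) (fun n => ⇑(f3 n))
      - Psi ℏ (fun n => ⇑(f0 n)) (ncProd ℏ (fun n => ⇑(f1 n)) (fun n => ⇑(f2 n))) (fun n => ⇑(f3 n))
      + Psi ℏ (fun n => ⇑(f0 n)) (fun n => ⇑(f1 n)) (ncProd ℏ (fun n => ⇑(f2 n)) (fun n => ⇑(f3 n)))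
      - Psi ℏ (ncProd ℏ (fun n => ⇑(f3 n)) (fun n => ⇑(f0 n))) (fun n => ⇑(f1 n)) (fun n => ⇑(f2 n))
      = 0 :=
  SchwartzCrossedProduct.Psi_cocycle (ℏ := ℏ) (.mk _ (.of_schwartz f0 h0))
    (.mk _ (.of_schwartz f1 h1)) (.mk _ (.of_schwartz f2 h2)) (.mk _ (.of_schwartz f3 h3))
end

section
/- Let ∇₁ξ(x,k) = α ∂_x ξ(x,k) and ∇₂ξ(x,k) = (βx + γk)ξ(x,k) on the left module E_ℏ with parameters λ₀ ≠ 0, λ₁, ε, r (λ₀ε + λ₁r = −ℏ). If α = 1/λ₀ and βε + γr = 2πi, then ∇ is a left connection: ∇_j(f·ξ) = f·(∇_jξ) + (∂_j f)·ξ for j = 1,2; moreover its curvature is constant: (∇₁∇₂ − ∇₂∇₁)ξ = αβ ξ. -/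
/-- The left action `(f·ξ)(x,k) = ∑_n f_n(λ₀x + λ₁k) ξ(x − nε, k − nr)`. -/
noncomputable def leftAct (l0 l1 ε : ℝ) (r : ℤ) (f : ℤ → ℝ → ℂ) (ξ : ℝ → ℤ → ℂ) :
    ℝ → ℤ → ℂ :=
  fun x k => ∑' n : ℤ, f n (l0 * x + l1 * k) * ξ (x - n * ε) (k - n * r)

/-- `∇₁ξ(x,k) = α ∂ₓξ(x,k)`. -/
noncomputable def nabla1 (α : ℂ) (ξ : ℝ → ℤ → ℂ) : ℝ → ℤ → ℂ :=
  fun x k => α * deriv (fun y => ξ y k) x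

/-- `∇₂ξ(x,k) = (βx + γk) ξ(x,k)`. -/
noncomputable def nabla2 (β γ : ℂ) (ξ : ℝ → ℤ → ℂ) : ℝ → ℤ → ℂ :=
  fun x k => (β * (x : ℂ) + γ * (k : ℂ)) * ξ x k

/-! The action of `f` is a finite sum as soon as `f` has finitely many nonzero Fourier modes
`f_n`, so both Leibniz rules reduce to termwise identities: for `∇₁` the chain rule produces the
factor `λ₀` in front of `f_n'`, cancelled by `α = 1/λ₀`; for `∇₂` the shift `(x,k) ↦ (x−nε, k−nr)`
changes `βx + γk` by `n(βε + γr) = 2πi n`. The curvature is the derivative of the coefficient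
`βx + γk`. -/

section LeftAction

variable {l0 l1 ε : ℝ} {r : ℤ}

theorem leftAct_eq_sum {f : ℤ → ℝ → ℂ} {s : Finset ℤ} (hs : ∀ n ∉ s, f n = 0)
    (ξ : ℝ → ℤ → ℂ) (x : ℝ) (k : ℤ) :
    leftAct l0 l1 ε r f ξ x k =
      ∑ n ∈ s, f n (l0 * x + l1 * k) * ξ (x - n * ε) (k - n * r) :=
  tsum_eq_sum fun n hn => by simp [hs n hn]

theorem leftAct_const_mul (f : ℤ → ℝ → ℂ) (ξ : ℝ → ℤ → ℂ) (c : ℂ) (x : ℝ) (k : ℤ) :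
    leftAct l0 l1 ε r f (fun x k => c * ξ x k) x k = c * leftAct l0 l1 ε r f ξ x k := by
  simp only [leftAct, ← tsum_mul_left]
  exact tsum_congr fun n => by ring

theorem d1_eq_zero {f : ℤ → ℝ → ℂ} {n : ℤ} (h : f n = 0) : d1 f n = 0 := by
  funext u
  simp [d1, h]

theorem d2_eq_zero {f : ℤ → ℝ → ℂ} {n : ℤ} (h : f n = 0) : d2 f n = 0 := by
  funext u
  simp [d2, h]

theorem hasDerivAt_leftAct {f : ℤ → ℝ → ℂ} {s : Finset ℤ} (hs : ∀ n ∉ s, f n = 0)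
    (hf : ∀ n, Differentiable ℝ (f n))
    {ξ : ℝ → ℤ → ℂ} (hξ : ∀ k : ℤ, Differentiable ℝ fun x => ξ x k) (x : ℝ) (k : ℤ) :
    HasDerivAt (fun y => leftAct l0 l1 ε r f ξ y k)
      (l0 * leftAct l0 l1 ε r (d1 f) ξ x k +
        leftAct l0 l1 ε r f (fun x k => deriv (fun y => ξ y k) x) x k) x := by
  have hcoeff (n : ℤ) : HasDerivAt (fun y : ℝ => f n (l0 * y + l1 * k))
      (l0 * d1 f n (l0 * x + l1 * k)) x := by
    have hin : HasDerivAt (fun y : ℝ => l0 * y + l1 * k) l0 x := by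
      simpa using ((hasDerivAt_id x).const_mul l0).add_const (l1 * (k : ℝ))
    simpa [d1, Complex.real_smul, Function.comp_def] using
      (hf n (l0 * x + l1 * k)).hasDerivAt.scomp x hin
  have hshift (n : ℤ) : HasDerivAt (fun y : ℝ => ξ (y - n * ε) (k - n * r))
      (deriv (fun y => ξ y (k - n * r)) (x - n * ε)) x := by
    simpa [Function.comp_def] using
      (hξ (k - n * r) (x - n * ε)).hasDerivAt.scomp x ((hasDerivAt_id x).sub_const _)
  have hsum := HasDerivAt.fun_sum (u := s) fun n _ => (hcoeff n).fun_mul (hshift n)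
  simp only [leftAct_eq_sum hs, leftAct_eq_sum fun n hn => d1_eq_zero (hs n hn), Finset.mul_sum,
    ← Finset.sum_add_distrib]
  exact hsum.congr_deriv (Finset.sum_congr rfl fun n _ => by ring)

theorem nabla1_leftAct {f : ℤ → ℝ → ℂ} (hfin : (Function.support f).Finite)
    (hf : ∀ n, Differentiable ℝ (f n)) {ξ : ℝ → ℤ → ℂ}
    (hξ : ∀ k : ℤ, Differentiable ℝ fun x => ξ x k) (hl0 : l0 ≠ 0) (x : ℝ) (k : ℤ) :
    nabla1 (1 / l0) (leftAct l0 l1 ε r f ξ) x k =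
      leftAct l0 l1 ε r f (nabla1 (1 / l0) ξ) x k + leftAct l0 l1 ε r (d1 f) ξ x k := by
  have hs : ∀ n ∉ hfin.toFinset, f n = 0 := by simp
  unfold nabla1
  rw [(hasDerivAt_leftAct hs hf hξ x k).deriv, leftAct_const_mul]
  have : (l0 : ℂ) ≠ 0 := by exact_mod_cast hl0
  field_simp
  ring

theorem nabla2_leftAct {β γ : ℂ} (hβγ : β * ε + γ * r = 2 * Real.pi * Complex.I)
    {f : ℤ → ℝ → ℂ} (hfin : (Function.support f).Finite) (ξ : ℝ → ℤ → ℂ) (x : ℝ) (k : ℤ) :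
    nabla2 β γ (leftAct l0 l1 ε r f ξ) x k =
      leftAct l0 l1 ε r f (nabla2 β γ ξ) x k + leftAct l0 l1 ε r (d2 f) ξ x k := by
  have hs : ∀ n ∉ hfin.toFinset, f n = 0 := by simp
  rw [nabla2, leftAct_eq_sum hs, leftAct_eq_sum hs,
    leftAct_eq_sum fun n hn => d2_eq_zero (hs n hn), Finset.mul_sum, ← Finset.sum_add_distrib]
  refine Finset.sum_congr rfl fun n _ => ?_
  simp only [nabla2, d2]
  push_cast
  linear_combination (n * f n (l0 * x + l1 * k) * ξ (x - n * ε) (k - n * r)) * hβγ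

end LeftAction

theorem nabla1_nabla2_sub_nabla2_nabla1 (α β γ : ℂ) {ξ : ℝ → ℤ → ℂ} (x : ℝ) (k : ℤ)
    (hξ : DifferentiableAt ℝ (fun y => ξ y k) x) :
    nabla1 α (nabla2 β γ ξ) x k - nabla2 β γ (nabla1 α ξ) x k = α * β * ξ x k := by
  have hcoeff : HasDerivAt (fun y : ℝ => β * y + γ * k) β x := by
    simpa using (Complex.ofRealCLM.hasDerivAt.const_mul β).add_const (γ * k)
  simp only [nabla1, nabla2, (hcoeff.fun_mul hξ.hasDerivAt).deriv]
  ring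

theorem nabla_left_connection_general (l0 l1 ε : ℝ) (r : ℤ) (α β γ : ℂ)
    (hl0 : l0 ≠ 0)
    (hα : α = 1 / (l0 : ℂ))
    (hβγ : β * (ε : ℂ) + γ * (r : ℂ) = 2 * Real.pi * Complex.I)
    (f : ℤ → ℝ → ℂ) (hfin : (Function.support f).Finite)
    (hf : ∀ n, Differentiable ℝ (f n))
    (ξ : ℝ → ℤ → ℂ) (hξ : ∀ k : ℤ, Differentiable ℝ fun x => ξ x k) :
    (∀ x k, nabla1 α (leftAct l0 l1 ε r f ξ) x k =
        leftAct l0 l1 ε r f (nabla1 α ξ) x k + leftAct l0 l1 ε r (d1 f) ξ x k) ∧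
    (∀ x k, nabla2 β γ (leftAct l0 l1 ε r f ξ) x k =
        leftAct l0 l1 ε r f (nabla2 β γ ξ) x k + leftAct l0 l1 ε r (d2 f) ξ x k) ∧
    (∀ x k, nabla1 α (nabla2 β γ ξ) x k - nabla2 β γ (nabla1 α ξ) x k =
        α * β * ξ x k) := by
  subst hα
  exact ⟨nabla1_leftAct hfin hf hξ hl0, nabla2_leftAct hβγ hfin ξ,
    fun x k => nabla1_nabla2_sub_nabla2_nabla1 _ β γ x k (hξ k x)⟩

/-- If `α = 1/λ₀` and `βε + γr = 2πi`, then `∇` is a left connection on `E_ℏ`,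
and its curvature is the constant `αβ`. -/
theorem nabla_left_connection (ℏ l0 l1 ε : ℝ) (r : ℤ) (α β γ : ℂ)
    (hl0 : l0 ≠ 0) (hpar : l0 * ε + l1 * r = -ℏ)
    (hα : α = 1 / (l0 : ℂ))
    (hβγ : β * (ε : ℂ) + γ * (r : ℂ) = 2 * Real.pi * Complex.I)
    (f : ℤ → ℝ → ℂ) (hfin : (Function.support f).Finite)
    (hf : ∀ n, Differentiable ℝ (f n))
    (ξ : ℝ → ℤ → ℂ) (hξ : ∀ k : ℤ, Differentiable ℝ fun x => ξ x k) :
    (∀ x k, nabla1 α (leftAct l0 l1 ε r f ξ) x k =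
        leftAct l0 l1 ε r f (nabla1 α ξ) x k + leftAct l0 l1 ε r (d1 f) ξ x k) ∧
    (∀ x k, nabla2 β γ (leftAct l0 l1 ε r f ξ) x k =
        leftAct l0 l1 ε r f (nabla2 β γ ξ) x k + leftAct l0 l1 ε r (d2 f) ξ x k) ∧
    (∀ x k, nabla1 α (nabla2 β γ ξ) x k - nabla2 β γ (nabla1 α ξ) x k =
        α * β * ξ x k) :=
  nabla_left_connection_general l0 l1 ε r α β γ hl0 hα hβγ f hfin hf ξ hξ
end
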